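/- arXiv:2409.14174 — 4 statements merged into one kernel-verified Lean document; each statement's English description precedes it below -/
import Mathlib

section
/- For every integer m ≥ 1 and every t ∈ [0, 1]: |SG_m(t) − t²| ≤ 2^{−2m−2}. -/
/-- The ReLU function. -/
noncomputable def relu (t : ℝ) : ℝ := max t 0

/-- The sawtooth generator `g(t) = 2σ(t) − 4σ(t − 1/2)`. -/
noncomputable def g (t : ℝ) : ℝ := 2 * relu t - 4 * relu (t - 1/2)

/-- `SG_m(t) = t − Σ_{s=1}^{m} g_s(t)/2^{2s}` where `g_s` is the `s`-fold composition of `g`. -/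
noncomputable def SG (m : ℕ) (t : ℝ) : ℝ :=
  t - ∑ s ∈ Finset.Icc 1 m, g^[s] t / (2 : ℝ) ^ (2 * s)

lemma g_mem {t : ℝ} (ht : t ∈ Set.Icc (0:ℝ) 1) : g t ∈ Set.Icc (0:ℝ) 1 := by
  obtain ⟨h0, h1⟩ := ht
  unfold g relu
  rcases le_or_gt t (1/2) with h | h
  · rw [max_eq_left h0, max_eq_right (by linarith)]
    constructor <;> [linarith; linarith]
  · rw [max_eq_left h0, max_eq_left (by linarith)]
    constructor <;> [linarith; linarith]

lemma key {t : ℝ} (ht : t ∈ Set.Icc (0:ℝ) 1) :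
    t - t ^ 2 = g t / 4 + (g t - (g t) ^ 2) / 4 := by
  obtain ⟨h0, h1⟩ := ht
  unfold g relu
  rcases le_or_gt t (1/2) with h | h
  · rw [max_eq_left h0, max_eq_right (by linarith)]
    ring
  · rw [max_eq_left h0, max_eq_left (by linarith)]
    ring

lemma iter_mem {t : ℝ} (ht : t ∈ Set.Icc (0:ℝ) 1) (m : ℕ) :
    g^[m] t ∈ Set.Icc (0:ℝ) 1 := by
  induction m with
  | zero => simpa using ht
  | succ n ih => rw [Function.iterate_succ_apply']; exact g_mem ih

lemma SG_eq (m : ℕ) {t : ℝ} (ht : t ∈ Set.Icc (0:ℝ) 1) :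
    SG m t = t ^ 2 + (g^[m] t - (g^[m] t) ^ 2) / 4 ^ m := by
  induction m with
  | zero => simp [SG]
  | succ n ih =>
    have hsum : SG (n+1) t = SG n t - g^[n+1] t / ((2:ℝ) ^ (2 * (n+1))) := by
      unfold SG
      rw [Finset.sum_Icc_succ_top (Nat.le_add_left 1 n)]
      ring
    have hpow : ((2:ℝ)) ^ (2 * (n+1)) = 4 ^ n * 4 := by
      rw [pow_mul]; norm_num [pow_succ]
    have hk := key (iter_mem ht n)
    have hit : g^[n+1] t = g (g^[n] t) := Function.iterate_succ_apply' g n t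
    rw [hsum, ih, hit, hpow, show (4:ℝ) ^ (n+1) = 4 ^ n * 4 from pow_succ 4 n]
    have key2 : (g^[n] t - (g^[n] t) ^ 2) / 4 ^ n - g (g^[n] t) / (4 ^ n * 4)
        = (g (g^[n] t) - (g (g^[n] t)) ^ 2) / (4 ^ n * 4) := by
      rw [hk]; ring
    linarith [key2]

theorem stmt2 (m : ℕ) (hm : 1 ≤ m) (t : ℝ) (ht : t ∈ Set.Icc (0 : ℝ) 1) :
    |SG m t - t ^ 2| ≤ (2 : ℝ) ^ (-(2 * (m : ℤ)) - 2) := by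
  rw [SG_eq m ht]
  obtain ⟨h0, h1⟩ := iter_mem ht m
  have h4 : (0:ℝ) < 4 ^ m := by positivity
  have hnn : 0 ≤ g^[m] t - (g^[m] t) ^ 2 := by nlinarith
  have hub : g^[m] t - (g^[m] t) ^ 2 ≤ 1/4 := by nlinarith [sq_nonneg (g^[m] t - 1/2)]
  have habs : |t ^ 2 + (g^[m] t - (g^[m] t) ^ 2) / 4 ^ m - t ^ 2|
      = (g^[m] t - (g^[m] t) ^ 2) / 4 ^ m := by
    rw [show t ^ 2 + (g^[m] t - (g^[m] t) ^ 2) / 4 ^ m - t ^ 2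
      = (g^[m] t - (g^[m] t) ^ 2) / 4 ^ m from by ring,
      abs_of_nonneg (div_nonneg hnn h4.le)]
  rw [habs]
  have hrhs : (2 : ℝ) ^ (-(2 * (m : ℤ)) - 2) = (1/4) / 4 ^ m := by
    rw [show -(2 * (m : ℤ)) - 2 = -((2 * m + 2 : ℕ) : ℤ) by push_cast; ring,
      zpow_neg, zpow_natCast, pow_add, pow_mul]
    norm_num
    ring
  rw [hrhs]
  gcongr
end

section
/- For every integer m ≥ 1, the function SG_m coincides on [0, 1] with the piecewise linear interpolant of t ↦ t² at the dyadic nodes k·2^{−m}; that is, SG_m(k·2^{−m}) = k²·2^{−2m} for every integer k with 0 ≤ k ≤ 2^m, and the restriction of SG_m to each interval [k·2^{−m}, (k+1)·2^{−m}] (0 ≤ k ≤ 2^m − 1) is an affine function. -/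
lemma g_lower (u : ℝ) (h0 : 0 ≤ u) (h : u ≤ 1/2) : g u = 2 * u := by
  unfold g relu
  rw [max_eq_left h0, max_eq_right (by linarith)]
  ring

lemma g_upper (u : ℝ) (h : 1/2 ≤ u) : g u = 2 - 2 * u := by
  unfold g relu
  rw [max_eq_left (by linarith), max_eq_left (by linarith)]
  ring

lemma gB : ∀ m k : ℕ, k < 2 ^ m → ∀ t : ℝ, (k : ℝ) / 2 ^ m ≤ t → t ≤ ((k : ℝ) + 1) / 2 ^ m →
    g^[m] t = if Even k then 2 ^ m * t - k else (k + 1) - 2 ^ m * t := by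
  intro m
  induction m with
  | zero =>
    intro k hk t h1 h2
    have hk0 : k = 0 := by omega
    subst hk0
    simp
  | succ m ih =>
    intro k hk t h1 h2
    have hp : (0:ℝ) < 2 ^ m := by positivity
    have hps : (2:ℝ) ^ (m+1) = 2 * 2 ^ m := by ring
    have H1 : (k : ℝ) ≤ t * (2 * 2 ^ m) := by
      rw [div_le_iff₀ (by positivity), hps] at h1; exact h1
    have H2 : t * (2 * 2 ^ m) ≤ (k : ℝ) + 1 := by
      rw [le_div_iff₀ (by positivity), hps] at h2; exact h2
    rw [Function.iterate_succ_apply']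
    rcases Nat.even_or_odd k with ⟨j, hj⟩ | ⟨j, hj⟩
    · -- k = j + j, even
      subst hj
      have hjr : ((j + j : ℕ) : ℝ) = (j:ℝ) + j := by push_cast; ring
      rw [hjr] at H1 H2
      have hj' : j < 2 ^ m := by
        have : 2 ^ (m+1) = 2 * 2 ^ m := by ring
        omega
      have ht1' : (j : ℝ) / 2 ^ m ≤ t := by rw [div_le_iff₀ hp]; nlinarith
      have ht2' : t ≤ ((j : ℝ) + 1) / 2 ^ m := by rw [le_div_iff₀ hp]; nlinarith
      have hu := ih j hj' t ht1' ht2'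
      rw [if_pos ⟨j, rfl⟩, hjr, hps]
      by_cases hje : Even j
      · rw [if_pos hje] at hu
        rw [hu, g_lower _ (by nlinarith [(div_le_iff₀ hp).mp ht1']) (by nlinarith)]
        ring
      · rw [if_neg hje] at hu
        rw [hu, g_upper _ (by nlinarith)]
        ring
    · -- k = 2j+1, odd
      subst hj
      have hjr : ((2 * j + 1 : ℕ) : ℝ) = 2 * (j:ℝ) + 1 := by push_cast; ring
      rw [hjr] at H1 H2
      have hj' : j < 2 ^ m := by
        have : 2 ^ (m+1) = 2 * 2 ^ m := by ring
        omega
      have ht1' : (j : ℝ) / 2 ^ m ≤ t := by rw [div_le_iff₀ hp]; nlinarith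
      have ht2' : t ≤ ((j : ℝ) + 1) / 2 ^ m := by rw [le_div_iff₀ hp]; nlinarith
      have hu := ih j hj' t ht1' ht2'
      rw [if_neg (by simp [Nat.even_iff, Nat.odd_iff.mp ⟨j, rfl⟩]), hjr, hps]
      by_cases hje : Even j
      · rw [if_pos hje] at hu
        rw [hu, g_upper _ (by nlinarith)]
        ring
      · rw [if_neg hje] at hu
        rw [hu, g_lower _ (by nlinarith) (by nlinarith)]
        ring

lemma SGA : ∀ m k : ℕ, k < 2 ^ m → ∀ t : ℝ, (k : ℝ) / 2 ^ m ≤ t → t ≤ ((k : ℝ) + 1) / 2 ^ m →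
    SG m t = (2 * k + 1) / 2 ^ m * t - k * (k + 1) / 2 ^ (2 * m) := by
  intro m
  induction m with
  | zero =>
    intro k hk t h1 h2
    have hk0 : k = 0 := by omega
    subst hk0
    simp [SG]
  | succ m ih =>
    intro k hk t h1 h2
    have hp : (0:ℝ) < 2 ^ m := by positivity
    have hSG : SG (m+1) t = SG m t - g^[m+1] t / 2 ^ (2 * (m+1)) := by
      unfold SG
      rw [Finset.sum_Icc_succ_top (by omega : 1 ≤ m + 1)]
      ring
    have hgb := gB (m+1) k hk t h1 h2
    rcases Nat.even_or_odd k with ⟨j, hj⟩ | ⟨j, hj⟩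
    · subst hj
      rw [if_pos ⟨j, rfl⟩] at hgb
      have hj' : j < 2 ^ m := by
        have : 2 ^ (m+1) = 2 * 2 ^ m := by ring
        omega
      have hjr : ((j + j : ℕ) : ℝ) = (j:ℝ) + j := by push_cast; ring
      have H1 : ((j:ℝ) + j) ≤ t * (2 * 2 ^ m) := by
        rw [div_le_iff₀ (by positivity)] at h1
        rw [hjr, (by ring : (2:ℝ) ^ (m+1) = 2 * 2 ^ m)] at h1; nlinarith [h1]
      have H2 : t * (2 * 2 ^ m) ≤ (j:ℝ) + j + 1 := by
        rw [le_div_iff₀ (by positivity)] at h2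
        rw [hjr, (by ring : (2:ℝ) ^ (m+1) = 2 * 2 ^ m)] at h2; nlinarith [h2]
      have ht1' : (j : ℝ) / 2 ^ m ≤ t := by rw [div_le_iff₀ hp]; nlinarith
      have ht2' : t ≤ ((j : ℝ) + 1) / 2 ^ m := by rw [le_div_iff₀ hp]; nlinarith
      rw [hSG, ih j hj' t ht1' ht2', hgb, hjr]
      field_simp
      ring
    · subst hj
      rw [if_neg (by simp [Nat.even_iff, Nat.odd_iff.mp ⟨j, rfl⟩])] at hgb
      have hj' : j < 2 ^ m := by
        have : 2 ^ (m+1) = 2 * 2 ^ m := by ring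
        omega
      have hjr : ((2 * j + 1 : ℕ) : ℝ) = 2 * (j:ℝ) + 1 := by push_cast; ring
      have H1 : (2 * (j:ℝ) + 1) ≤ t * (2 * 2 ^ m) := by
        rw [div_le_iff₀ (by positivity)] at h1
        rw [hjr, (by ring : (2:ℝ) ^ (m+1) = 2 * 2 ^ m)] at h1; nlinarith [h1]
      have H2 : t * (2 * 2 ^ m) ≤ 2 * (j:ℝ) + 1 + 1 := by
        rw [le_div_iff₀ (by positivity)] at h2
        rw [hjr, (by ring : (2:ℝ) ^ (m+1) = 2 * 2 ^ m)] at h2; nlinarith [h2]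
      have ht1' : (j : ℝ) / 2 ^ m ≤ t := by rw [div_le_iff₀ hp]; nlinarith
      have ht2' : t ≤ ((j : ℝ) + 1) / 2 ^ m := by rw [le_div_iff₀ hp]; nlinarith
      rw [hSG, ih j hj' t ht1' ht2', hgb, hjr]
      field_simp
      ring

theorem stmt3 (m : ℕ) (hm : 1 ≤ m) :
    (∀ k : ℕ, k ≤ 2 ^ m →
      SG m ((k : ℝ) * (2 : ℝ) ^ (-(m : ℤ))) = (k : ℝ) ^ 2 * (2 : ℝ) ^ (-(2 * (m : ℤ)))) ∧
    (∀ k : ℕ, k ≤ 2 ^ m - 1 → ∃ α β : ℝ,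
      ∀ t ∈ Set.Icc ((k : ℝ) * (2 : ℝ) ^ (-(m : ℤ))) (((k : ℝ) + 1) * (2 : ℝ) ^ (-(m : ℤ))),
        SG m t = α * t + β) := by
  have hp : (0:ℝ) < 2 ^ m := by positivity
  have hz : (2:ℝ) ^ (-(m : ℤ)) = ((2:ℝ) ^ m)⁻¹ := by
    rw [zpow_neg, zpow_natCast]
  have hz2 : (2:ℝ) ^ (-(2 * (m : ℤ))) = ((2:ℝ) ^ (2 * m))⁻¹ := by
    rw [zpow_neg]
    norm_cast
  constructor
  · intro k hk
    rw [hz, hz2]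
    by_cases hlt : k < 2 ^ m
    · have h := SGA m k hlt ((k : ℝ) * ((2:ℝ) ^ m)⁻¹)
        (by rw [div_eq_mul_inv]) (by
          rw [div_eq_mul_inv]
          have : (0:ℝ) ≤ ((2:ℝ) ^ m)⁻¹ := by positivity
          nlinarith)
      rw [h]
      field_simp
      ring
    · have hke : k = 2 ^ m := le_antisymm hk (le_of_not_gt hlt)
      subst hke
      have h2m : (1:ℕ) ≤ 2 ^ m := Nat.one_le_two_pow
      have hc : ((2 ^ m - 1 : ℕ) : ℝ) = (2:ℝ) ^ m - 1 := by
        push_cast [h2m]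
        ring
      have hcast : ((2 ^ m : ℕ) : ℝ) = (2:ℝ) ^ m := by push_cast; ring
      have ht : ((2 ^ m : ℕ) : ℝ) * ((2:ℝ) ^ m)⁻¹ = 1 := by
        rw [hcast]; field_simp
      have h := SGA m (2 ^ m - 1) (by omega) 1
        (by rw [hc, div_le_one hp]; linarith)
        (by rw [hc]; rw [le_div_iff₀ hp]; linarith)
      rw [ht, h, hc, hcast]
      field_simp
      ring
  · intro k hk
    have hlt : k < 2 ^ m := by
      have : (1:ℕ) ≤ 2 ^ m := Nat.one_le_two_pow
      omega
    refine ⟨(2 * k + 1) / 2 ^ m, -((k : ℝ) * (k + 1) / 2 ^ (2 * m)), ?_⟩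
    intro t ht
    rw [hz] at ht
    obtain ⟨ht1, ht2⟩ := ht
    rw [SGA m k hlt t (by rw [div_eq_mul_inv]; exact ht1)
      (by rw [div_eq_mul_inv]; exact ht2)]
    ring
end

section
/- For every integer s ≥ 1, the s-fold composition g_s is the uniform sawtooth with 2^{s−1} teeth on [0, 1]: for every integer k with 0 ≤ k ≤ 2^{s−1} − 1 and every t ∈ [k·2^{1−s}, (k+1)·2^{1−s}], one has g_s(t) = g(2^{s−1} t − k). -/
lemma g_eval_lo {t : ℝ} (h0 : 0 ≤ t) (h1 : t ≤ 1/2) : g t = 2 * t := by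
  unfold g relu
  rw [max_eq_left h0, max_eq_right (by linarith)]
  ring

lemma g_eval_hi {t : ℝ} (h0 : 1/2 ≤ t) (h1 : t ≤ 1) : g t = 2 - 2 * t := by
  unfold g relu
  rw [max_eq_left (by linarith), max_eq_left (by linarith)]
  ring

lemma g_symm {x : ℝ} (h0 : 0 ≤ x) (h1 : x ≤ 1) : g (1 - x) = g x := by
  rcases le_or_gt x (1/2) with h | h
  · rw [g_eval_lo h0 h, g_eval_hi (by linarith) (by linarith)]
    ring
  · rw [g_eval_hi (by linarith) h1, g_eval_lo (by linarith) (by linarith)]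
    ring

lemma sawtooth_aux (m : ℕ) : ∀ (k : ℕ), k ≤ 2 ^ m - 1 → ∀ t : ℝ,
    (k : ℝ) ≤ 2 ^ m * t → 2 ^ m * t ≤ (k : ℝ) + 1 →
    g^[m + 1] t = g ((2 : ℝ) ^ m * t - (k : ℝ)) := by
  induction m with
  | zero =>
    intro k hk t h1 h2
    interval_cases k
    simp
  | succ m ih =>
    intro k hk t h1 h2
    have h2pow : (1:ℕ) ≤ 2 ^ m := Nat.one_le_two_pow
    have h2pow' : (2:ℕ) ^ (m+1) = 2 * 2 ^ m := by ring
    have hpos : (0:ℝ) < 2 ^ m := by positivity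
    have hkR : (k : ℝ) + 1 ≤ 2 ^ (m + 1) := by
      have : k + 1 ≤ 2 ^ (m+1) := by omega
      exact_mod_cast this
    have hstep : g^[m + 1 + 1] t = g^[m + 1] (g t) :=
      Function.iterate_succ_apply g (m+1) t
    rcases le_or_gt k (2 ^ m - 1) with hcase | hcase
    · -- lower half : t ≤ 1/2
      have hkR2 : (k : ℝ) + 1 ≤ 2 ^ m := by
        have : k + 1 ≤ 2 ^ m := by omega
        exact_mod_cast this
      have ht0 : 0 ≤ t := by
        have hk0 : (0:ℝ) ≤ (k:ℝ) := Nat.cast_nonneg k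
        nlinarith
      have ht12 : t ≤ 1/2 := by
        have : (2:ℝ) ^ (m+1) = 2 * 2 ^ m := by ring
        nlinarith
      have hgt : g t = 2 * t := g_eval_lo ht0 ht12
      rw [hstep, hgt]
      have := ih k hcase (2 * t)
        (by nlinarith [pow_succ (2:ℝ) m]) (by nlinarith [pow_succ (2:ℝ) m])
      rw [this]
      ring_nf
    · -- upper half : t ≥ 1/2
      have hk2m : 2 ^ m ≤ k := by omega
      have hk2mR : (2:ℝ) ^ m ≤ (k:ℝ) := by exact_mod_cast hk2m
      have ht12 : 1/2 ≤ t := by nlinarith [pow_succ (2:ℝ) m]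
      have ht1 : t ≤ 1 := by nlinarith [pow_succ (2:ℝ) m]
      have hgt : g t = 2 - 2 * t := g_eval_hi ht12 ht1
      set k' : ℕ := 2 ^ (m+1) - 1 - k with hk'
      have hk'le : k' ≤ 2 ^ m - 1 := by omega
      have hk'R : (k' : ℝ) = 2 ^ (m+1) - 1 - (k:ℝ) := by
        have : (k' : ℕ) = 2 ^ (m+1) - 1 - k := rfl
        have hle : k + 1 ≤ 2 ^ (m+1) := by omega
        push_cast [hk', Nat.cast_sub (by omega : k ≤ 2 ^ (m+1) - 1),
          Nat.cast_sub (by omega : 1 ≤ 2 ^ (m+1))]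
        ring
      rw [hstep, hgt]
      have key := ih k' hk'le (2 - 2 * t)
        (by rw [hk'R]; nlinarith [pow_succ (2:ℝ) m])
        (by rw [hk'R]; nlinarith [pow_succ (2:ℝ) m])
      rw [key, hk'R]
      have harg : (2:ℝ) ^ m * (2 - 2*t) - ((2:ℝ)^(m+1) - 1 - (k:ℝ))
          = 1 - ((2:ℝ)^(m+1) * t - (k:ℝ)) := by
        rw [pow_succ]; ring
      rw [harg]
      exact g_symm (by linarith) (by linarith)

theorem stmt4 (s : ℕ) (hs : 1 ≤ s) (k : ℕ) (hk : k ≤ 2 ^ (s - 1) - 1)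
    (t : ℝ)
    (ht : t ∈ Set.Icc ((k : ℝ) * (2 : ℝ) ^ ((1 : ℤ) - (s : ℤ)))
      (((k : ℝ) + 1) * (2 : ℝ) ^ ((1 : ℤ) - (s : ℤ)))) :
    g^[s] t = g ((2 : ℝ) ^ (s - 1) * t - (k : ℝ)) := by
  obtain ⟨m, rfl⟩ : ∃ m, s = m + 1 := ⟨s - 1, by omega⟩
  simp only [Nat.add_sub_cancel] at hk ⊢
  have hz : ((1 : ℤ) - ((m:ℕ) + 1 : ℕ)) = -(m : ℤ) := by push_cast; ring
  rw [Set.mem_Icc, hz, zpow_neg, zpow_natCast] at ht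
  have hpos : (0:ℝ) < 2 ^ m := by positivity
  have h1 : (k : ℝ) ≤ 2 ^ m * t := by
    have h := mul_le_mul_of_nonneg_left ht.1 hpos.le
    calc (k:ℝ) = 2 ^ m * ((k:ℝ) * ((2:ℝ)^m)⁻¹) := by field_simp
    _ ≤ 2 ^ m * t := h
  have h2 : 2 ^ m * t ≤ (k : ℝ) + 1 := by
    have h := mul_le_mul_of_nonneg_left ht.2 hpos.le
    calc (2:ℝ) ^ m * t ≤ 2 ^ m * (((k:ℝ) + 1) * ((2:ℝ)^m)⁻¹) := h
    _ = (k:ℝ) + 1 := by field_simp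
  exact sawtooth_aux m k hk t h1 h2
end

section
/- Let ρ be a probability measure on Z = X × ℝ with regression function f_ρ, let M > 0, and suppose |y| ≤ M for ρ-almost every (x, y), |f_ρ(x)| ≤ M for ρ_X-almost every x, and f : X → ℝ is measurable with |f(x)| ≤ M for ρ_X-almost every x. Define η(x, y) = (f(x) − y)² − (f_ρ(x) − y)². Then |η| ≤ 8M² almost surely, ∫_Z η dρ = ‖f − f_ρ‖²_{L²(ρ_X)} ≥ 0, and ∫_Z η² dρ ≤ 16 M² ∫_Z η dρ. -/
set_option maxHeartbeats 1000000

open MeasureTheory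

theorem stmt12 {X : Type*} [MeasurableSpace X]
    (ρ : Measure (X × ℝ)) [IsProbabilityMeasure ρ]
    (M : ℝ) (hM : 0 < M)
    (fρ : X → ℝ) (hfρmeas : Measurable fρ)
    -- `fρ` is the regression function: (a version of) the conditional expectation of the
    -- output `y` given the input `x`.
    (hreg : (fun z : X × ℝ => fρ z.1) =ᵐ[ρ]
      ρ[(fun z : X × ℝ => z.2) | MeasurableSpace.comap Prod.fst inferInstance])
    (hy : ∀ᵐ z ∂ρ, |z.2| ≤ M)
    (hfρbdd : ∀ᵐ x ∂(ρ.map Prod.fst), |fρ x| ≤ M)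
    (f : X → ℝ) (hf : Measurable f)
    (hfbdd : ∀ᵐ x ∂(ρ.map Prod.fst), |f x| ≤ M) :
    (∀ᵐ z ∂ρ, |(f z.1 - z.2) ^ 2 - (fρ z.1 - z.2) ^ 2| ≤ 8 * M ^ 2) ∧
    (∫ z, ((f z.1 - z.2) ^ 2 - (fρ z.1 - z.2) ^ 2) ∂ρ
        = ∫ x, (f x - fρ x) ^ 2 ∂(ρ.map Prod.fst)) ∧
    (0 ≤ ∫ z, ((f z.1 - z.2) ^ 2 - (fρ z.1 - z.2) ^ 2) ∂ρ) ∧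
    (∫ z, ((f z.1 - z.2) ^ 2 - (fρ z.1 - z.2) ^ 2) ^ 2 ∂ρ
        ≤ 16 * M ^ 2 * ∫ z, ((f z.1 - z.2) ^ 2 - (fρ z.1 - z.2) ^ 2) ∂ρ) := by
  have hfst : Measurable (Prod.fst : X × ℝ → X) := measurable_fst
  -- pull back the bounds along the projection
  have hgb : ∀ᵐ z ∂ρ, |f z.1| ≤ M :=
    (ae_map_iff hfst.aemeasurable (measurableSet_le hf.abs measurable_const)).mp hfbdd
  have hhb : ∀ᵐ z ∂ρ, |fρ z.1| ≤ M :=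
    (ae_map_iff hfst.aemeasurable (measurableSet_le hfρmeas.abs measurable_const)).mp hfρbdd
  have hm : MeasurableSpace.comap (Prod.fst : X × ℝ → X) inferInstance ≤
      Prod.instMeasurableSpace := hfst.comap_le
  haveI : IsFiniteMeasure (ρ.trim hm) := isFiniteMeasure_trim hm
  -- measurability facts
  have hφmeas : Measurable (fun z : X × ℝ => f z.1 - fρ z.1) :=
    (hf.comp hfst).sub (hfρmeas.comp hfst)
  have hηmeas : Measurable (fun z : X × ℝ => (f z.1 - z.2) ^ 2 - (fρ z.1 - z.2) ^ 2) := by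
    fun_prop
  have hφb : ∀ᵐ z ∂ρ, |f z.1 - fρ z.1| ≤ 2 * M := by
    filter_upwards [hgb, hhb] with z h1 h2
    calc |f z.1 - fρ z.1| ≤ |f z.1| + |fρ z.1| := abs_sub (f z.1) (fρ z.1)
      _ ≤ 2 * M := by linarith
  have hηb : ∀ᵐ z ∂ρ, |(f z.1 - z.2) ^ 2 - (fρ z.1 - z.2) ^ 2| ≤ 8 * M ^ 2 := by
    filter_upwards [hgb, hhb, hy] with z h1 h2 h3
    rw [abs_le]
    obtain ⟨a1, a2⟩ := abs_le.mp h1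
    obtain ⟨b1, b2⟩ := abs_le.mp h2
    obtain ⟨c1, c2⟩ := abs_le.mp h3
    constructor <;> nlinarith
  have hYint : Integrable (fun z : X × ℝ => z.2) ρ :=
    (integrable_const M).mono' measurable_snd.aestronglyMeasurable
      (by filter_upwards [hy] with z hz using by simpa using hz)
  have hφsqint : Integrable (fun z : X × ℝ => (f z.1 - fρ z.1) ^ 2) ρ :=
    (integrable_const (4 * M ^ 2)).mono' (hφmeas.pow_const 2).aestronglyMeasurable
      (by filter_upwards [hφb] with z h1
          simp only [Real.norm_eq_abs]
          rw [abs_of_nonneg (sq_nonneg _)]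
          nlinarith [abs_nonneg (f z.1 - fρ z.1), sq_abs (f z.1 - fρ z.1)])
  have hηint : Integrable (fun z : X × ℝ => (f z.1 - z.2) ^ 2 - (fρ z.1 - z.2) ^ 2) ρ :=
    (integrable_const (8 * M ^ 2)).mono' hηmeas.aestronglyMeasurable
      (by filter_upwards [hgb, hhb, hy] with z h1 h2 h3
          simp only [Real.norm_eq_abs]
          rw [abs_le]
          obtain ⟨a1, a2⟩ := abs_le.mp h1
          obtain ⟨b1, b2⟩ := abs_le.mp h2
          obtain ⟨c1, c2⟩ := abs_le.mp h3
          constructor <;> nlinarith)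
  have hηsqint : Integrable (fun z : X × ℝ => ((f z.1 - z.2) ^ 2 - (fρ z.1 - z.2) ^ 2) ^ 2) ρ :=
    (integrable_const (64 * M ^ 4)).mono' (hηmeas.pow_const 2).aestronglyMeasurable
      (by filter_upwards [hηb] with z h1
          simp only [Real.norm_eq_abs]
          rw [abs_of_nonneg (sq_nonneg _)]
          obtain ⟨a1, a2⟩ := abs_le.mp h1
          nlinarith [sq_nonneg M])
  have hφYint : Integrable ((fun z : X × ℝ => f z.1 - fρ z.1) * fun z : X × ℝ => z.2) ρ :=
    (integrable_const (2 * M * M)).mono' (hφmeas.mul measurable_snd).aestronglyMeasurable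
      (by filter_upwards [hφb, hy] with z h1 h3
          simp only [Pi.mul_apply, Real.norm_eq_abs, abs_mul]
          exact mul_le_mul h1 h3 (abs_nonneg _) (by linarith))
  have hφhint : Integrable (fun z : X × ℝ => (f z.1 - fρ z.1) * fρ z.1) ρ :=
    (integrable_const (2 * M * M)).mono' (hφmeas.mul (hfρmeas.comp hfst)).aestronglyMeasurable
      (by filter_upwards [hφb, hhb] with z h1 h2
          simp only [Real.norm_eq_abs, abs_mul]
          exact mul_le_mul h1 h2 (abs_nonneg _) (by linarith))
  have hcrossint : Integrable (fun z : X × ℝ => (f z.1 - fρ z.1) * (fρ z.1 - z.2)) ρ :=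
    (integrable_const (2 * M * (2 * M))).mono'
      (hφmeas.mul ((hfρmeas.comp hfst).sub measurable_snd)).aestronglyMeasurable
      (by filter_upwards [hφb, hhb, hy] with z h1 h2 h3
          simp only [Real.norm_eq_abs, abs_mul]
          have h4 : |fρ z.1 - z.2| ≤ 2 * M := by
            calc |fρ z.1 - z.2| ≤ |fρ z.1| + |z.2| := abs_sub (fρ z.1) z.2
              _ ≤ 2 * M := by linarith
          exact mul_le_mul h1 h4 (abs_nonneg _) (by linarith))
  -- the cross term vanishes
  have hφm : StronglyMeasurable[MeasurableSpace.comap (Prod.fst : X × ℝ → X) inferInstance] (fun z : X × ℝ => f z.1 - fρ z.1) := by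
    have hfstm : Measurable[MeasurableSpace.comap (Prod.fst : X × ℝ → X) inferInstance] (Prod.fst : X × ℝ → X) := measurable_iff_comap_le.mpr le_rfl
    exact (((hf.sub hfρmeas).comp hfstm)).stronglyMeasurable
  have hcross : ∫ z, (f z.1 - fρ z.1) * (fρ z.1 - z.2) ∂ρ = 0 := by
    have hkey : ∫ z, (f z.1 - fρ z.1) * z.2 ∂ρ = ∫ z, (f z.1 - fρ z.1) * fρ z.1 ∂ρ := by
      have h1 := condExp_mul_of_stronglyMeasurable_left (μ := ρ) hφm hφYint hYint
      have h2 : ∫ z, ((fun z : X × ℝ => f z.1 - fρ z.1) * fun z : X × ℝ => z.2) z ∂ρ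
          = ∫ z, (ρ[(fun z : X × ℝ => f z.1 - fρ z.1) * fun z : X × ℝ => z.2|MeasurableSpace.comap Prod.fst inferInstance]) z ∂ρ :=
        (integral_condExp hm).symm
      calc ∫ z, (f z.1 - fρ z.1) * z.2 ∂ρ
          = ∫ z, (ρ[(fun z : X × ℝ => f z.1 - fρ z.1) * fun z : X × ℝ => z.2|MeasurableSpace.comap Prod.fst inferInstance]) z ∂ρ := h2
        _ = ∫ z, (f z.1 - fρ z.1) * fρ z.1 ∂ρ := by
            refine integral_congr_ae (h1.trans ?_)
            filter_upwards [hreg] with z hz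
            simp only [Pi.mul_apply, ← hz]
    have hφYint' : Integrable (fun z : X × ℝ => (f z.1 - fρ z.1) * z.2) ρ := hφYint
    have heq : ∫ z, (f z.1 - fρ z.1) * (fρ z.1 - z.2) ∂ρ
        = (∫ z, (f z.1 - fρ z.1) * fρ z.1 ∂ρ) - ∫ z, (f z.1 - fρ z.1) * z.2 ∂ρ := by
      rw [← integral_sub hφhint hφYint']
      exact integral_congr_ae (.of_forall fun z => by ring)
    rw [heq, hkey, sub_self]
  -- main identity for the integral
  have hmain : ∫ z, ((f z.1 - z.2) ^ 2 - (fρ z.1 - z.2) ^ 2) ∂ρ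
      = ∫ z, (f z.1 - fρ z.1) ^ 2 ∂ρ := by
    calc ∫ z, ((f z.1 - z.2) ^ 2 - (fρ z.1 - z.2) ^ 2) ∂ρ
        = ∫ z, ((f z.1 - fρ z.1) ^ 2 + 2 * ((f z.1 - fρ z.1) * (fρ z.1 - z.2))) ∂ρ :=
          integral_congr_ae (.of_forall fun z => by ring)
      _ = (∫ z, (f z.1 - fρ z.1) ^ 2 ∂ρ)
            + 2 * ∫ z, (f z.1 - fρ z.1) * (fρ z.1 - z.2) ∂ρ := by
          rw [integral_add hφsqint (hcrossint.const_mul 2), integral_const_mul]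
      _ = ∫ z, (f z.1 - fρ z.1) ^ 2 ∂ρ := by rw [hcross]; ring
  have hmap : ∫ x, (f x - fρ x) ^ 2 ∂(ρ.map Prod.fst) = ∫ z, (f z.1 - fρ z.1) ^ 2 ∂ρ :=
    integral_map hfst.aemeasurable ((hf.sub hfρmeas).pow_const 2).aestronglyMeasurable
  refine ⟨?_, ?_, ?_, ?_⟩
  · filter_upwards [hgb, hhb, hy] with z h1 h2 h3
    rw [abs_le]
    obtain ⟨a1, a2⟩ := abs_le.mp h1
    obtain ⟨b1, b2⟩ := abs_le.mp h2
    obtain ⟨c1, c2⟩ := abs_le.mp h3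
    constructor <;> nlinarith
  · rw [hmain, hmap]
  · rw [hmain]
    exact integral_nonneg fun z => sq_nonneg _
  · rw [hmain]
    calc ∫ z, ((f z.1 - z.2) ^ 2 - (fρ z.1 - z.2) ^ 2) ^ 2 ∂ρ
        ≤ ∫ z, 16 * M ^ 2 * (f z.1 - fρ z.1) ^ 2 ∂ρ := by
          refine integral_mono_ae hηsqint (hφsqint.const_mul _) ?_
          filter_upwards [hgb, hhb, hy] with z h1 h2 h3
          obtain ⟨a1, a2⟩ := abs_le.mp h1
          obtain ⟨b1, b2⟩ := abs_le.mp h2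
          obtain ⟨c1, c2⟩ := abs_le.mp h3
          have hid : ((f z.1 - z.2) ^ 2 - (fρ z.1 - z.2) ^ 2) ^ 2
              = (f z.1 - fρ z.1) ^ 2 * (f z.1 + fρ z.1 - 2 * z.2) ^ 2 := by ring
          have hb : (f z.1 + fρ z.1 - 2 * z.2) ^ 2 ≤ 16 * M ^ 2 := by nlinarith
          rw [hid]
          calc (f z.1 - fρ z.1) ^ 2 * (f z.1 + fρ z.1 - 2 * z.2) ^ 2
              ≤ (f z.1 - fρ z.1) ^ 2 * (16 * M ^ 2) :=
                mul_le_mul_of_nonneg_left hb (sq_nonneg _)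
            _ = 16 * M ^ 2 * (f z.1 - fρ z.1) ^ 2 := by ring
      _ = 16 * M ^ 2 * ∫ z, (f z.1 - fρ z.1) ^ 2 ∂ρ := integral_const_mul _ _
end
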